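/- arXiv:math/0612547 — 2 statements merged into one kernel-verified Lean document; each statement's English description precedes it below -/
import Mathlib

section
/- Let A : ℂ^n → ℂ^n be a unitary linear map, let z₁, w, v ∈ ℂ^n, and let k > 0 be a real number. Then i·√k·(ω₀(w,z₁) − ω₀(v,z₁)) + k·ψ₂(A z₁ + (1/√k)·A w, z₁ + (1/√k)·v) = k·⟪A z₁ − z₁, z₁⟫ + √k·(⟪w, A⁻¹ z₁ − z₁⟫ + ⟪A z₁ − z₁, v⟫) + ψ₂(A w, v). -/
/-- The standard Hermitian inner product on `ℂ^n`, linear in the **first** variable: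
`⟪a, b⟫ = ∑ j, a j * conj (b j)`. -/
noncomputable def herm {n : ℕ} (a b : EuclideanSpace ℂ (Fin n)) : ℂ :=
  inner ℂ b a

/-- The standard symplectic form `ω₀(a, b) = - Im ⟪a, b⟫` on `ℂ^n`. -/
noncomputable def omega0 {n : ℕ} (a b : EuclideanSpace ℂ (Fin n)) : ℝ :=
  - (herm a b).im

/-- `ψ₂(a, b) = ⟪a, b⟫ - (‖a‖² + ‖b‖²)/2`. -/
noncomputable def psi2 {n : ℕ} (a b : EuclideanSpace ℂ (Fin n)) : ℂ :=
  herm a b - (1 / 2 : ℂ) * ((‖a‖ : ℂ) ^ 2 + (‖b‖ : ℂ) ^ 2)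

/-!
Expanding `ψ₂` sesquilinearly in the scaled increments `k^{-1/2} A w` and `k^{-1/2} v` gives
`k ψ₂(A z₁, z₁) + √k (⟪A w, z₁⟫ + ⟪A z₁, v⟫ - Re ⟪A z₁, A w⟫ - Re ⟪z₁, v⟫) + ψ₂(A w, v)`.
Since `A` is unitary, `ψ₂(A z₁, z₁) = ⟪A z₁ - z₁, z₁⟫`, `⟪A w, z₁⟫ = ⟪w, A⁻¹ z₁⟫` and
`Re ⟪A z₁, A w⟫ = Re ⟪w, z₁⟫`; what remains of the order-`√k` term are the imaginary parts
`⟪w, z₁⟫ - Re ⟪w, z₁⟫ = -i ω₀(w, z₁)` and `⟪z₁, v⟫ - Re ⟪z₁, v⟫ = i ω₀(v, z₁)`, which cancel the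
symplectic term on the left.
-/

open Complex

theorem norm_add_ofReal_smul_sq {𝕜 E : Type*} [RCLike 𝕜] [NormedAddCommGroup E]
    [InnerProductSpace 𝕜 E] (x y : E) (t : ℝ) :
    ‖x + (t : 𝕜) • y‖ ^ 2 = ‖x‖ ^ 2 + 2 * t * RCLike.re (inner 𝕜 x y) + t ^ 2 * ‖y‖ ^ 2 := by
  rw [norm_add_sq (𝕜 := 𝕜), norm_smul, RCLike.norm_ofReal, mul_pow, sq_abs, inner_smul_right,
    RCLike.re_ofReal_mul]
  ring

section Herm

variable {n : ℕ}

lemma herm_sub_left (a b c : EuclideanSpace ℂ (Fin n)) : herm (a - b) c = herm a c - herm b c :=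
  inner_sub_right c a b

lemma herm_sub_right (a b c : EuclideanSpace ℂ (Fin n)) : herm a (b - c) = herm a b - herm a c :=
  inner_sub_left b c a

lemma re_herm_comm (a b : EuclideanSpace ℂ (Fin n)) : (herm b a).re = (herm a b).re :=
  inner_re_symm (𝕜 := ℂ) a b

lemma herm_eq_re_sub_I_mul_omega0 (a b : EuclideanSpace ℂ (Fin n)) :
    herm a b = (herm a b).re - I * omega0 a b := by
  conv_lhs => rw [← re_add_im (herm a b)]
  simp only [omega0, ofReal_neg]
  ring

lemma omega0_comm (a b : EuclideanSpace ℂ (Fin n)) : omega0 b a = - omega0 a b := by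
  rw [omega0, omega0, herm, herm, ← inner_conj_symm, conj_im, neg_neg]

lemma herm_eq_re_add_I_mul_omega0_swap (a b : EuclideanSpace ℂ (Fin n)) :
    herm a b = (herm a b).re + I * omega0 b a := by
  rw [omega0_comm, ofReal_neg]
  linear_combination herm_eq_re_sub_I_mul_omega0 a b

lemma herm_map_map (A : EuclideanSpace ℂ (Fin n) ≃ₗᵢ[ℂ] EuclideanSpace ℂ (Fin n))
    (a b : EuclideanSpace ℂ (Fin n)) : herm (A a) (A b) = herm a b :=
  A.inner_map_map b a

lemma herm_map_left (A : EuclideanSpace ℂ (Fin n) ≃ₗᵢ[ℂ] EuclideanSpace ℂ (Fin n))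
    (a b : EuclideanSpace ℂ (Fin n)) : herm (A a) b = herm a (A.symm b) := by
  rw [← herm_map_map A a (A.symm b), A.apply_symm_apply]

lemma psi2_of_norm_eq {a b : EuclideanSpace ℂ (Fin n)} (h : ‖a‖ = ‖b‖) :
    psi2 a b = herm (a - b) b := by
  rw [psi2, herm_sub_left, h]
  simp only [herm, inner_self_eq_norm_sq_to_K, RCLike.ofReal_eq_complex_ofReal]
  ring

lemma psi2_add_smul_ofReal (a b c d : EuclideanSpace ℂ (Fin n)) (t : ℝ) :
    psi2 (a + (t : ℂ) • b) (c + (t : ℂ) • d)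
      = psi2 a c + t * (herm b c + herm a d - (herm a b).re - (herm c d).re)
        + t ^ 2 * psi2 b d := by
  have norm_sq_ofReal (x y : EuclideanSpace ℂ (Fin n)) :
      (‖x + (t : ℂ) • y‖ : ℂ) ^ 2 = ‖x‖ ^ 2 + 2 * t * (herm x y).re + t ^ 2 * ‖y‖ ^ 2 := by
    have h : ‖x + (t : ℂ) • y‖ ^ 2 = ‖x‖ ^ 2 + 2 * t * (herm y x).re + t ^ 2 * ‖y‖ ^ 2 :=
      norm_add_ofReal_smul_sq x y t
    rw [re_herm_comm y x]
    exact_mod_cast h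
  simp only [psi2, norm_sq_ofReal, herm, inner_add_left, inner_add_right, inner_smul_left,
    inner_smul_right, conj_ofReal]
  ring

end Herm

theorem phase_identity_linear_case {n : ℕ}
    (A : EuclideanSpace ℂ (Fin n) ≃ₗᵢ[ℂ] EuclideanSpace ℂ (Fin n))
    (z₁ w v : EuclideanSpace ℂ (Fin n)) (k : ℝ) (hk : 0 < k) :
    Complex.I * (Real.sqrt k : ℂ) * ((omega0 w z₁ - omega0 v z₁ : ℝ) : ℂ)
        + (k : ℂ) * psi2 (A z₁ + ((Real.sqrt k : ℂ))⁻¹ • A w)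
            (z₁ + ((Real.sqrt k : ℂ))⁻¹ • v)
      = (k : ℂ) * herm (A z₁ - z₁) z₁
        + (Real.sqrt k : ℂ) * (herm w (A.symm z₁ - z₁) + herm (A z₁ - z₁) v)
        + psi2 (A w) v := by
  have hs : (Real.sqrt k : ℂ) ≠ 0 := by exact_mod_cast (Real.sqrt_pos.2 hk).ne'
  have hk_sq : (k : ℂ) = (Real.sqrt k : ℂ) ^ 2 := by
    rw [← ofReal_pow, Real.sq_sqrt hk.le]
  rw [← ofReal_inv, psi2_add_smul_ofReal, psi2_of_norm_eq (A.norm_map z₁), herm_map_left,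
    herm_map_map, re_herm_comm w z₁, ofReal_inv, hk_sq]
  field_simp
  simp only [herm_sub_right, herm_sub_left, ofReal_sub]
  linear_combination (Real.sqrt k : ℂ) * (herm_eq_re_sub_I_mul_omega0 w z₁
    + herm_eq_re_add_I_mul_omega0_swap z₁ v)
end

section
/- Let V ⊆ ℂ^n be a real-linear subspace on which ω₀ vanishes identically (equivalently, V and iV are orthogonal for the real inner product Re⟪·,·⟫), and let H be the Hermitian orthogonal complement of V + iV in ℂ^n. Suppose w, v ∈ ℂ^n are decomposed as w = w_h + w_v + w_t and v = v_h + v_v + v_t with w_h, v_h ∈ H, w_v, v_v ∈ V, and w_t, v_t ∈ iV. Then for every ν ∈ V: ψ₂(w − ν, v) + i·ω₀(ν, w) = ψ₂(w_h, v_h) − ½‖w_t − v_t‖² − ½‖w_v − ν − v_v‖² − i·ω₀(w_v − ν − v_v, w_t + v_t) + i·(ω₀(w_v, w_t) − ω₀(v_v, v_t)). -/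
/-! Since `ψ₂(a, b) = -½‖a - b‖² - i ω₀(a, b)`, the identity splits into a norm identity and a
symplectic one. The three components are pairwise orthogonal for `Re ⟪·,·⟫`: `H` by assumption,
and `V ⟂ iV` because `Re ⟪p, i q⟫ = -ω₀(p, q)` vanishes on the isotropic `V`; so the norm splits
by Pythagoras. Likewise `ω₀` vanishes on `H × (V + iV)`, on `V × V` and on `iV × iV`, so only the
cross terms between `V` and `iV` survive the bilinear expansion of the symplectic part. -/

open Complex

variable {n : ℕ}

section Herm

variable (a b c : EuclideanSpace ℂ (Fin n))

lemma herm_add_left : herm (a + b) c = herm a c + herm b c := inner_add_right c a b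

lemma herm_add_right : herm a (b + c) = herm a b + herm a c := inner_add_left b c a

lemma herm_conj_symm : herm b a = (starRingEnd ℂ) (herm a b) := (inner_conj_symm a b).symm

lemma herm_I_smul_left : herm (I • a) b = I * herm a b := inner_smul_right b a I

lemma herm_I_smul_right : herm a (I • b) = -I * herm a b := by
  simp [herm, conj_I, mul_comm]

lemma herm_eq_zero_of_herm_eq_zero {a b : EuclideanSpace ℂ (Fin n)} (h : herm a b = 0) :
    herm b a = 0 := by
  rw [herm_conj_symm, h, map_zero]

lemma norm_sub_sq_eq_sub_re_herm : ‖a - b‖ ^ 2 = ‖a‖ ^ 2 + ‖b‖ ^ 2 - 2 * (herm a b).re := by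
  rw [norm_sub_sq (𝕜 := ℂ), herm, inner_re_symm, RCLike.re_to_complex]
  ring

lemma norm_add_sq_of_re_herm_eq_zero {a b : EuclideanSpace ℂ (Fin n)} (h : (herm a b).re = 0) :
    ‖a + b‖ ^ 2 = ‖a‖ ^ 2 + ‖b‖ ^ 2 := by
  rw [norm_add_sq (𝕜 := ℂ), ← inner_re_symm, RCLike.re_to_complex, ← herm, h]
  ring

end Herm

section Omega

variable (a b c : EuclideanSpace ℂ (Fin n))

lemma omega0_add_left : omega0 (a + b) c = omega0 a c + omega0 b c := by
  simp only [omega0, herm_add_left, add_im]; ring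

lemma omega0_add_right : omega0 a (b + c) = omega0 a b + omega0 a c := by
  simp only [omega0, herm_add_right, add_im]; ring

lemma omega0_sub_left : omega0 (a - b) c = omega0 a c - omega0 b c := by
  simp only [omega0, herm, inner_sub_right, sub_im]; ring

lemma omega0_swap : omega0 b a = -omega0 a b := by
  simp [omega0, herm_conj_symm a b]

lemma omega0_I_smul_I_smul : omega0 (I • a) (I • b) = omega0 a b := by
  simp [omega0, herm_I_smul_left, herm_I_smul_right]

lemma re_herm_I_smul_right : (herm a (I • b)).re = -omega0 a b := by
  simp [omega0, herm_I_smul_right]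

end Omega

lemma psi2_eq (a b : EuclideanSpace ℂ (Fin n)) :
    psi2 a b = -(1 / 2 : ℂ) * (‖a - b‖ : ℂ) ^ 2 - I * (omega0 a b : ℂ) := by
  rw [psi2, omega0, ← ofReal_pow (‖a - b‖), norm_sub_sq_eq_sub_re_herm]
  conv_lhs => rw [← re_add_im (herm a b)]
  push_cast
  ring

lemma psi2_add_add_of_herm_eq_zero {a b x y : EuclideanSpace ℂ (Fin n)}
    (hax : herm a x = 0) (hay : herm a y = 0) (hbx : herm b x = 0) (hby : herm b y = 0) :
    psi2 (a + x) (b + y) = psi2 a b + psi2 x y := by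
  have hnorm : ∀ {p q : EuclideanSpace ℂ (Fin n)}, herm p q = 0 →
      (‖p + q‖ : ℂ) ^ 2 = (‖p‖ : ℂ) ^ 2 + (‖q‖ : ℂ) ^ 2 := fun h => by
    exact_mod_cast norm_add_sq_of_re_herm_eq_zero (by simp [h])
  simp only [psi2, herm_add_left, herm_add_right, hay, herm_eq_zero_of_herm_eq_zero hbx,
    hnorm hax, hnorm hby]
  ring

lemma herm_add_I_smul_eq_zero {V : Submodule ℝ (EuclideanSpace ℂ (Fin n))}
    {h p q : EuclideanSpace ℂ (Fin n)} (hh : ∀ u ∈ V, herm h u = 0 ∧ herm h (I • u) = 0)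
    (hp : p ∈ V) (hq : q ∈ V) : herm h (p + I • q) = 0 := by
  rw [herm_add_right, (hh p hp).1, (hh q hq).2, add_zero]

lemma psi2_add_I_omega0_of_isotropic {V : Submodule ℝ (EuclideanSpace ℂ (Fin n))}
    (hV : ∀ a ∈ V, ∀ b ∈ V, omega0 a b = 0) {a s c t ν : EuclideanSpace ℂ (Fin n)}
    (ha : a ∈ V) (hs : s ∈ V) (hc : c ∈ V) (ht : t ∈ V) (hν : ν ∈ V) :
    psi2 (a - ν + I • s) (c + I • t) + I * (omega0 ν (a + I • s) : ℂ)
      = -(1 / 2 : ℂ) * (‖I • s - I • t‖ : ℂ) ^ 2 - (1 / 2 : ℂ) * (‖a - ν - c‖ : ℂ) ^ 2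
        - I * (omega0 (a - ν - c) (I • s + I • t) : ℂ)
        + I * ((omega0 a (I • s) - omega0 c (I • t) : ℝ) : ℂ) := by
  have hnorm : ‖a - ν + I • s - (c + I • t)‖ ^ 2 = ‖I • s - I • t‖ ^ 2 + ‖a - ν - c‖ ^ 2 := by
    have hre : (herm (a - ν - c) (I • (s - t))).re = 0 := by
      rw [re_herm_I_smul_right, hV _ (V.sub_mem (V.sub_mem ha hν) hc) _ (V.sub_mem hs ht), neg_zero]
    rw [show a - ν + I • s - (c + I • t) = (a - ν - c) + I • (s - t) by module,
      norm_add_sq_of_re_herm_eq_zero hre, smul_sub, add_comm]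
  have homega : omega0 (a - ν + I • s) (c + I • t) - omega0 ν (a + I • s)
      = omega0 (a - ν - c) (I • s + I • t) - omega0 a (I • s) + omega0 c (I • t) := by
    simp only [omega0_add_left, omega0_add_right, omega0_sub_left,
      omega0_I_smul_I_smul, hV _ ha _ hc, hV _ hν _ hc, hV _ hν _ ha, hV _ hs _ ht]
    linarith [omega0_swap c (I • s)]
  rw [psi2_eq, ← ofReal_pow, hnorm]
  have homegaℂ := congrArg ((↑) : ℝ → ℂ) homega
  push_cast at homegaℂ ⊢
  linear_combination (-I) * homegaℂ

/-- The key algebraic decomposition `T_h + T_t + T_v + T_vt` of the exponent in the proof of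
the equivariant scaling asymptotics.  Here `V` is an isotropic real subspace of `ℂ^n`
(the tangent space to the group orbit), `iV` its image under multiplication by `i`
(the transverse space), and the horizontal components `w_h, v_h` are Hermitian-orthogonal
to `V + iV`. -/
theorem exponent_decomposition {n : ℕ}
    (V : Submodule ℝ (EuclideanSpace ℂ (Fin n)))
    (hV : ∀ a ∈ V, ∀ b ∈ V, omega0 a b = 0)
    (w v wh vh wv vv wt vt : EuclideanSpace ℂ (Fin n))
    (hwh : ∀ u ∈ V, herm wh u = 0 ∧ herm wh (Complex.I • u) = 0)
    (hvh : ∀ u ∈ V, herm vh u = 0 ∧ herm vh (Complex.I • u) = 0)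
    (hwv : wv ∈ V) (hvv : vv ∈ V)
    (hwt : ∃ u ∈ V, wt = Complex.I • u) (hvt : ∃ u ∈ V, vt = Complex.I • u)
    (hw : w = wh + wv + wt) (hv : v = vh + vv + vt)
    (ν : EuclideanSpace ℂ (Fin n)) (hν : ν ∈ V) :
    psi2 (w - ν) v + Complex.I * ((omega0 ν w : ℝ) : ℂ)
      = psi2 wh vh - (1 / 2 : ℂ) * (‖wt - vt‖ : ℂ) ^ 2
        - (1 / 2 : ℂ) * (‖wv - ν - vv‖ : ℂ) ^ 2
        - Complex.I * ((omega0 (wv - ν - vv) (wt + vt) : ℝ) : ℂ)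
        + Complex.I * ((omega0 wv wt - omega0 vv vt : ℝ) : ℂ) := by
  obtain ⟨s, hs, rfl⟩ := hwt
  obtain ⟨t, ht, rfl⟩ := hvt
  subst hw hv
  have hwvν := V.sub_mem hwv hν
  have hsplit : psi2 (wh + wv + I • s - ν) (vh + vv + I • t)
      = psi2 wh vh + psi2 (wv - ν + I • s) (vv + I • t) := by
    rw [show wh + wv + I • s - ν = wh + (wv - ν + I • s) by abel, add_assoc vh]
    exact psi2_add_add_of_herm_eq_zero (herm_add_I_smul_eq_zero hwh hwvν hs)
      (herm_add_I_smul_eq_zero hwh hvv ht) (herm_add_I_smul_eq_zero hvh hwvν hs)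
      (herm_add_I_smul_eq_zero hvh hvv ht)
  have hνwh : omega0 ν wh = 0 := by
    simp [omega0, herm_eq_zero_of_herm_eq_zero (hwh ν hν).1]
  rw [hsplit, add_assoc wh, omega0_add_right, hνwh, zero_add, add_assoc,
    psi2_add_I_omega0_of_isotropic hV hwv hs hvv ht hν]
  ring
end
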